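/- arXiv:math/0010074 — 8 statements merged into one kernel-verified Lean document; each statement's English description precedes it below -/
import Mathlib

section
/- Let A be an associative algebra over a field F with a nondegenerate symmetric associative bilinear form ⟨·,·⟩ (i.e., ⟨uv,w⟩ = ⟨u,vw⟩ for all u,v,w), and suppose A = A⁺ ⊕ A⁻ as vector spaces where A⁺ and A⁻ are subalgebras with ⟨A⁺,A⁺⟩ = 0 and ⟨A⁻,A⁻⟩ = 0. Define A⁽⁰⁾ = {u ∈ A⁺ | A⁻·u ⊆ A⁻} and A^[0] = {u ∈ A⁺ | u·A⁻ ⊆ A⁻}. Then A⁽⁰⁾ = A^[0]. -/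
/-!
If `A = A⁺ ⊕ A⁻` with both summands isotropic for a nondegenerate form, then `A⁻` is its own
orthogonal complement: the `A⁺`-component of a vector orthogonal to `A⁻` is orthogonal to
everything. Membership in `A⁻` can thus be tested against `A⁻`, and associativity and symmetry of
the form move `u` across: `⟨u x, n⟩ = ⟨n u, x⟩` and `⟨x u, n⟩ = ⟨x, u n⟩`, both of which vanish
by isotropy of `A⁻` as soon as the other stabilizer condition holds.
-/

namespace LinearMap.BilinForm

section Polarization

variable {R M : Type*} [CommSemiring R] [AddCommMonoid M] [Module R M]
  {B : LinearMap.BilinForm R M} {P N : Submodule R M}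

theorem mem_of_forall_apply_eq_zero_of_isCompl (hB : LinearMap.SeparatingLeft B)
    (hP : ∀ a ∈ P, ∀ b ∈ P, B a b = 0) (hN : ∀ a ∈ N, ∀ b ∈ N, B a b = 0) (hPN : IsCompl P N)
    {a : M} (ha : ∀ n ∈ N, B a n = 0) : a ∈ N := by
  have decompose := Submodule.codisjoint_iff_exists_add_eq.mp hPN.codisjoint
  obtain ⟨p, n, hp, hn, rfl⟩ := decompose a
  have hp_orth_N : ∀ n' ∈ N, B p n' = 0 := fun n' hn' => by
    simpa [hN n hn n' hn'] using ha n' hn'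
  have hp_zero : p = 0 := hB p fun v => by
    obtain ⟨p', n', hp', hn', rfl⟩ := decompose v
    simp [hP p hp p' hp', hp_orth_N n' hn']
  simpa [hp_zero] using hn

end Polarization

section Stabilizer

variable {R A : Type*} [CommSemiring R] [Semiring A] [Algebra R A]
  {B : LinearMap.BilinForm R A} {N : Submodule R A}

theorem mul_mem_of_forall_mul_mem_left (hsymm : ∀ u v : A, B u v = B v u)
    (hassoc : ∀ u v w : A, B (u * v) w = B u (v * w)) (hN : ∀ a ∈ N, ∀ b ∈ N, B a b = 0)
    (hmem : ∀ a : A, (∀ n ∈ N, B a n = 0) → a ∈ N) {u : A} (hu : ∀ x ∈ N, x * u ∈ N)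
    {x : A} (hx : x ∈ N) : u * x ∈ N :=
  hmem _ fun n hn => by rw [hsymm, ← hassoc]; exact hN _ (hu n hn) x hx

theorem mul_mem_of_forall_mul_mem_right (hassoc : ∀ u v w : A, B (u * v) w = B u (v * w))
    (hN : ∀ a ∈ N, ∀ b ∈ N, B a b = 0) (hmem : ∀ a : A, (∀ n ∈ N, B a n = 0) → a ∈ N)
    {u : A} (hu : ∀ x ∈ N, u * x ∈ N) {x : A} (hx : x ∈ N) : x * u ∈ N :=
  hmem _ fun n hn => by rw [hassoc]; exact hN x hx _ (hu n hn)

end Stabilizer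

end LinearMap.BilinForm

open LinearMap.BilinForm

theorem polarized_left_stab_eq_right_stab_general
    {F : Type*} [Field F] {A : Type*} [Ring A] [Algebra F A]
    (B : LinearMap.BilinForm F A)
    (hsymm : ∀ u v : A, B u v = B v u)
    (hassoc : ∀ u v w : A, B (u * v) w = B u (v * w))
    (hnd : ∀ u : A, (∀ v : A, B u v = 0) → u = 0)
    (P N : Submodule F A)
    (hPiso : ∀ a ∈ P, ∀ b ∈ P, B a b = 0)
    (hNiso : ∀ a ∈ N, ∀ b ∈ N, B a b = 0)
    (hcompl : IsCompl P N) :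
    {u : A | u ∈ P ∧ ∀ x ∈ N, x * u ∈ N} = {u : A | u ∈ P ∧ ∀ x ∈ N, u * x ∈ N} := by
  have hmem : ∀ a : A, (∀ n ∈ N, B a n = 0) → a ∈ N := fun _ =>
    mem_of_forall_apply_eq_zero_of_isCompl hnd hPiso hNiso hcompl
  ext u
  exact and_congr_right fun _ =>
    ⟨fun hu _ => mul_mem_of_forall_mul_mem_left hsymm hassoc hNiso hmem hu,
      fun hu _ => mul_mem_of_forall_mul_mem_right hassoc hNiso hmem hu⟩

/-- In a polarized associative algebra, the left stabilizer
`A⁽⁰⁾ = {u ∈ A⁺ | A⁻·u ⊆ A⁻}` equals the right stabilizer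
`A^[0] = {u ∈ A⁺ | u·A⁻ ⊆ A⁻}`. -/
theorem polarized_left_stab_eq_right_stab
    {F : Type*} [Field F] {A : Type*} [Ring A] [Algebra F A]
    (B : LinearMap.BilinForm F A)
    (hsymm : ∀ u v : A, B u v = B v u)
    (hassoc : ∀ u v w : A, B (u * v) w = B u (v * w))
    (hnd : ∀ u : A, (∀ v : A, B u v = 0) → u = 0)
    (P N : Submodule F A)
    (hPmul : ∀ a ∈ P, ∀ b ∈ P, a * b ∈ P)
    (hNmul : ∀ a ∈ N, ∀ b ∈ N, a * b ∈ N)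
    (hPiso : ∀ a ∈ P, ∀ b ∈ P, B a b = 0)
    (hNiso : ∀ a ∈ N, ∀ b ∈ N, B a b = 0)
    (hcompl : IsCompl P N) :
    {u : A | u ∈ P ∧ ∀ x ∈ N, x * u ∈ N} = {u : A | u ∈ P ∧ ∀ x ∈ N, u * x ∈ N} :=
  polarized_left_stab_eq_right_stab_general B hsymm hassoc hnd P N hPiso hNiso hcompl
end

section
/- Let A = A⁺ ⊕ A⁻ be a polarized associative algebra over a field F. Define inductively A⁽⁰⁾ = {u ∈ A⁺ | A⁻u ⊆ A⁻} and A⁽ᵐ⁺¹⁾ = {u ∈ A⁺ | A⁻u ⊆ A⁽ᵐ⁾ + A⁻}. Then for all m, n ∈ ℕ, A⁽ᵐ⁾ · A⁽ⁿ⁾ ⊆ A⁽ᵐ⁺ⁿ⁾. -/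
/-!
Prepend `A⁽⁻¹⁾ = 0`: then each `A⁽ᵐ⁾` is obtained from the previous piece by a single operation `S ↦ {u ∈ A⁺ | A⁻u ⊆ S + A⁻}`, which is monotone in `S`.
For `x ∈ A⁻` write `xu = y + z` with `y` one step lower and `z ∈ A⁻`, then `zv = y' + z'`
likewise; so `x(uv) = yv + y' + z'`, where `yv` is handled by induction on the index of `u`
and `y'` by monotonicity.
-/

namespace PolarizedFiltration

variable {R A : Type*} [CommSemiring R] [Semiring A] [Algebra R A]

def filtStep (P N S : Submodule R A) : Submodule R A :=
  P ⊓ ⨅ x ∈ N, (S ⊔ N).comap (LinearMap.mulLeft R x)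

variable {P N : Submodule R A}

theorem mem_filtStep {S : Submodule R A} {u : A} :
    u ∈ filtStep P N S ↔ u ∈ P ∧ ∀ x ∈ N, x * u ∈ S ⊔ N := by
  simp [filtStep]

theorem filtStep_mono : Monotone (filtStep P N) := fun _ _ hST _ hu =>
  mem_filtStep.2 ⟨(mem_filtStep.1 hu).1,
    fun x hx => sup_le_sup_right hST N ((mem_filtStep.1 hu).2 x hx)⟩

theorem mul_mem_filtStep (hP : ∀ a ∈ P, ∀ b ∈ P, a * b ∈ P) {S T U : Submodule R A} {u v : A}
    (hu : u ∈ filtStep P N S) (hv : v ∈ filtStep P N T)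
    (hSv : ∀ y ∈ S, y * v ∈ U) (hTU : T ≤ U) : u * v ∈ filtStep P N U := by
  rw [mem_filtStep] at hu hv ⊢
  refine ⟨hP u hu.1 v hv.1, fun x hx => ?_⟩
  obtain ⟨y, hy, z, hz, hxu⟩ := Submodule.mem_sup.1 (hu.2 x hx)
  obtain ⟨y', hy', z', hz', hzv⟩ := Submodule.mem_sup.1 (hv.2 z hz)
  have hx_uv : x * (u * v) = (y * v + y') + z' := by
    rw [← mul_assoc, ← hxu, add_mul, ← hzv, add_assoc]
  rw [hx_uv]
  exact Submodule.add_mem_sup (U.add_mem (hSv y hy) (hTU hy')) hz'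

variable (P N) in
/-- `polarFilt P N (m + 1)` is `A⁽ᵐ⁾`; `polarFilt P N 0 = ⊥`. -/
def polarFilt : ℕ → Submodule R A
  | 0 => ⊥
  | k + 1 => filtStep P N (polarFilt k)

theorem polarFilt_monotone : Monotone (polarFilt P N) := by
  refine monotone_nat_of_le_succ fun k => ?_
  induction k with
  | zero => exact bot_le
  | succ k ih => exact filtStep_mono ih

theorem mul_mem_polarFilt (hP : ∀ a ∈ P, ∀ b ∈ P, a * b ∈ P) (m n : ℕ) {u v : A}
    (hu : u ∈ polarFilt P N m) (hv : v ∈ polarFilt P N (n + 1)) :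
    u * v ∈ polarFilt P N (m + n) := by
  induction m generalizing u with
  | zero =>
    rw [polarFilt, Submodule.mem_bot] at hu
    simp [hu]
  | succ m ih =>
    rw [Nat.succ_add]
    exact mul_mem_filtStep hP hu hv (fun _ => ih) (polarFilt_monotone (by omega))

end PolarizedFiltration

open PolarizedFiltration

theorem polarized_filt_mul_general
    {F : Type*} [Field F] {A : Type*} [Ring A] [Algebra F A]
    (P N : Submodule F A)
    (hPmul : ∀ a ∈ P, ∀ b ∈ P, a * b ∈ P)
    (Filt : ℕ → Set A)
    (hF0 : Filt 0 = {u : A | u ∈ P ∧ ∀ x ∈ N, x * u ∈ N})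
    (hFs : ∀ m : ℕ, Filt (m + 1) =
      {u : A | u ∈ P ∧ ∀ x ∈ N, ∃ y ∈ Filt m, ∃ z ∈ N, x * u = y + z}) :
    ∀ m n : ℕ, ∀ u ∈ Filt m, ∀ v ∈ Filt n, u * v ∈ Filt (m + n) := by
  have hFilt : ∀ m, Filt m = polarFilt P N (m + 1) := by
    intro m
    induction m with
    | zero =>
      ext u
      simp [hF0, polarFilt, mem_filtStep]
    | succ m ih =>
      ext u
      simp only [hFs, ih, Set.mem_ofPred_eq, SetLike.mem_coe, polarFilt, mem_filtStep,
        Submodule.mem_sup, eq_comm]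
  intro m n u hu v hv
  rw [hFilt] at hu hv ⊢
  simpa [Nat.add_right_comm] using mul_mem_polarFilt hPmul (m + 1) n hu hv

/-- `A⁽ᵐ⁾ · A⁽ⁿ⁾ ⊆ A⁽ᵐ⁺ⁿ⁾` for all `m, n ∈ ℕ`. -/
theorem polarized_filt_mul
    {F : Type*} [Field F] {A : Type*} [Ring A] [Algebra F A]
    (B : LinearMap.BilinForm F A)
    (hsymm : ∀ u v : A, B u v = B v u)
    (hassoc : ∀ u v w : A, B (u * v) w = B u (v * w))
    (hnd : ∀ u : A, (∀ v : A, B u v = 0) → u = 0)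
    (P N : Submodule F A)
    (hPmul : ∀ a ∈ P, ∀ b ∈ P, a * b ∈ P)
    (hNmul : ∀ a ∈ N, ∀ b ∈ N, a * b ∈ N)
    (hPiso : ∀ a ∈ P, ∀ b ∈ P, B a b = 0)
    (hNiso : ∀ a ∈ N, ∀ b ∈ N, B a b = 0)
    (hcompl : IsCompl P N)
    (Filt : ℕ → Set A)
    (hF0 : Filt 0 = {u : A | u ∈ P ∧ ∀ x ∈ N, x * u ∈ N})
    (hFs : ∀ m : ℕ, Filt (m + 1) =
      {u : A | u ∈ P ∧ ∀ x ∈ N, ∃ y ∈ Filt m, ∃ z ∈ N, x * u = y + z}) :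
    ∀ m n : ℕ, ∀ u ∈ Filt m, ∀ v ∈ Filt n, u * v ∈ Filt (m + n) :=
  polarized_filt_mul_general P N hPmul Filt hF0 hFs
end

section
/- Let A = A⁺ ⊕ A⁻ be a polarized associative algebra over a field F with filtration A⁽⁰⁾ = {u ∈ A⁺ | A⁻u ⊆ A⁻}, A⁽ᵐ⁺¹⁾ = {u ∈ A⁺ | A⁻u ⊆ A⁽ᵐ⁾ + A⁻}, and set A⁽⁻¹⁾ = A⁻ and A⁽⁻²⁻ᵐ⁾ = {u ∈ A⁻ | ⟨u, A⁽ᵐ⁾⟩ = 0} for m ∈ ℕ. Then for all m, n ∈ ℕ: A⁽⁻ᵐ⁻¹⁾ · A⁽⁻ⁿ⁻¹⁾ ⊆ A⁽⁻ᵐ⁻ⁿ⁻²⁾. -/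
/-!
With the convention `A⁽⁻¹⁾ = 0`, the filtration satisfies `A⁽ᵐ⁺ʲ⁾ · A⁽⁻ᵐ⁻¹⁾ ⊆ A⁽ʲ⁻¹⁾ + A⁻`,
by induction on `j`. For `j = 0` the `A⁺`-component `p` of `w u` vanishes by nondegeneracy: it is
orthogonal to `A⁺` by isotropy and to `A⁻` since `⟨t, w u⟩ = ⟨t w, u⟩` with
`t w ∈ A⁽ᵐ⁻¹⁾ + A⁻ ⊥ u`. For the step, `t p ≡ (t w) u` modulo `A⁻` for `t ∈ A⁻`.
The theorem follows: for `y ∈ A⁽ᵐ⁺ⁿ⁾`, `⟨u v, y⟩ = ⟨y u, v⟩` and `y u ∈ A⁽ⁿ⁻¹⁾ + A⁻ ⊥ v`.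
-/

open scoped Pointwise

namespace PolarizedAlgebra

variable {R A : Type*} [CommRing R] [Ring A] [Module R A]

/-- `posFilt P N (k + 1)` is `A⁽ᵏ⁾`, and `posFilt P N 0 = {0}` plays the role of `A⁽⁻¹⁾`. -/
def posFilt (P N : Submodule R A) : ℕ → Set A
  | 0 => {0}
  | k + 1 => {u | u ∈ P ∧ ∀ x ∈ N, x * u ∈ posFilt P N k + (N : Set A)}

/-- `negFilt B P N k` is `A⁽⁻ᵏ⁻¹⁾`. -/
def negFilt (B : LinearMap.BilinForm R A) (P N : Submodule R A) (k : ℕ) : Set A :=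
  {u | u ∈ N ∧ ∀ y ∈ posFilt P N k, B u y = 0}

variable {B : LinearMap.BilinForm R A} {P N : Submodule R A}

theorem orthogonal_le_self (hsymm : ∀ u v : A, B u v = B v u)
    (hnd : ∀ u : A, (∀ v : A, B u v = 0) → u = 0)
    (hPiso : ∀ a ∈ P, ∀ b ∈ P, B a b = 0) (hNiso : ∀ a ∈ N, ∀ b ∈ N, B a b = 0)
    (hcod : Codisjoint P N) : B.orthogonal N ≤ N := by
  intro a ha
  obtain ⟨p, x, hp, hx, rfl⟩ := Submodule.codisjoint_iff_exists_add_eq.mp hcod a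
  have hp_orth_N : ∀ t ∈ N, B p t = 0 := fun t ht => by
    have := ha t ht
    rwa [map_add, hNiso t ht x hx, add_zero, hsymm] at this
  have hp0 : p = 0 := hnd p fun v => by
    obtain ⟨s, t, hs, ht, rfl⟩ := Submodule.codisjoint_iff_exists_add_eq.mp hcod v
    rw [map_add, hPiso p hp s hs, hp_orth_N t ht, add_zero]
  rwa [hp0, zero_add]

theorem apply_eq_zero_of_mem_posFilt_add (hsymm : ∀ u v : A, B u v = B v u)
    (hNiso : ∀ a ∈ N, ∀ b ∈ N, B a b = 0) {k : ℕ} {a u : A}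
    (ha : a ∈ posFilt P N k + (N : Set A)) (hu : u ∈ negFilt B P N k) : B a u = 0 := by
  obtain ⟨p, hp, x, hx, rfl⟩ := ha
  rw [map_add, LinearMap.add_apply, hsymm p u, hu.2 p hp, hNiso x hx u hu.1, add_zero]

theorem mul_mem_posFilt_add (hsymm : ∀ u v : A, B u v = B v u)
    (hassoc : ∀ u v w : A, B (u * v) w = B u (v * w))
    (hnd : ∀ u : A, (∀ v : A, B u v = 0) → u = 0)
    (hNmul : ∀ a ∈ N, ∀ b ∈ N, a * b ∈ N)
    (hPiso : ∀ a ∈ P, ∀ b ∈ P, B a b = 0) (hNiso : ∀ a ∈ N, ∀ b ∈ N, B a b = 0)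
    (hcod : Codisjoint P N) {m : ℕ} {u : A} (hu : u ∈ negFilt B P N m) :
    ∀ j : ℕ, ∀ w ∈ posFilt P N (m + j + 1), w * u ∈ posFilt P N j + (N : Set A)
  | 0, w, hw => by
    have hwu : w * u ∈ N := orthogonal_le_self hsymm hnd hPiso hNiso hcod fun t ht => by
      rw [← hassoc]
      exact apply_eq_zero_of_mem_posFilt_add hsymm hNiso (hw.2 t ht) hu
    exact ⟨0, rfl, w * u, hwu, zero_add _⟩
  | j + 1, w, hw => by
    obtain ⟨p, x, hp, hx, hpx⟩ := Submodule.codisjoint_iff_exists_add_eq.mp hcod (w * u)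
    refine ⟨p, ⟨hp, fun t ht => ?_⟩, x, hx, hpx⟩
    obtain ⟨q, hq, z, hz, hqz : q + z = t * w⟩ := hw.2 t ht
    obtain ⟨r, hr, y, hy, hry : r + y = q * u⟩ :=
      mul_mem_posFilt_add hsymm hassoc hnd hNmul hPiso hNiso hcod hu j q hq
    have htp : t * p = r + (y + z * u - t * x) := by
      rw [eq_sub_of_add_eq hpx, mul_sub, ← mul_assoc, ← hqz, add_mul, ← hry]
      abel
    exact ⟨r, hr, _, N.sub_mem (N.add_mem hy (hNmul z hz u hu.1)) (hNmul t ht x hx), htp.symm⟩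

theorem mul_mem_negFilt (hsymm : ∀ u v : A, B u v = B v u)
    (hassoc : ∀ u v w : A, B (u * v) w = B u (v * w))
    (hnd : ∀ u : A, (∀ v : A, B u v = 0) → u = 0)
    (hNmul : ∀ a ∈ N, ∀ b ∈ N, a * b ∈ N)
    (hPiso : ∀ a ∈ P, ∀ b ∈ P, B a b = 0) (hNiso : ∀ a ∈ N, ∀ b ∈ N, B a b = 0)
    (hcod : Codisjoint P N) {m n : ℕ} {u v : A} (hu : u ∈ negFilt B P N m)
    (hv : v ∈ negFilt B P N n) : u * v ∈ negFilt B P N (m + n + 1) := by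
  refine ⟨hNmul u hu.1 v hv.1, fun y hy => ?_⟩
  rw [hsymm, ← hassoc]
  exact apply_eq_zero_of_mem_posFilt_add hsymm hNiso
    (mul_mem_posFilt_add hsymm hassoc hnd hNmul hPiso hNiso hcod hu n y hy) hv

theorem eq_posFilt_succ {Filt : ℕ → Set A}
    (hF0 : Filt 0 = {u : A | u ∈ P ∧ ∀ x ∈ N, x * u ∈ N})
    (hFs : ∀ m : ℕ, Filt (m + 1) =
      {u : A | u ∈ P ∧ ∀ x ∈ N, ∃ y ∈ Filt m, ∃ z ∈ N, x * u = y + z}) :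
    ∀ k, Filt k = posFilt P N (k + 1)
  | 0 => by
    rw [hF0, posFilt, posFilt, Set.singleton_zero, zero_add]
    rfl
  | k + 1 => by
    rw [hFs, posFilt, ← eq_posFilt_succ hF0 hFs k]
    simp only [Set.mem_add, SetLike.mem_coe, eq_comm]

end PolarizedAlgebra

theorem polarized_neg_filt_mul_general
    {F : Type*} [Field F] {A : Type*} [Ring A] [Algebra F A]
    (B : LinearMap.BilinForm F A)
    (hsymm : ∀ u v : A, B u v = B v u)
    (hassoc : ∀ u v w : A, B (u * v) w = B u (v * w))
    (hnd : ∀ u : A, (∀ v : A, B u v = 0) → u = 0)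
    (P N : Submodule F A)
    (hNmul : ∀ a ∈ N, ∀ b ∈ N, a * b ∈ N)
    (hPiso : ∀ a ∈ P, ∀ b ∈ P, B a b = 0)
    (hNiso : ∀ a ∈ N, ∀ b ∈ N, B a b = 0)
    (hcompl : IsCompl P N)
    (Filt : ℕ → Set A)
    (hF0 : Filt 0 = {u : A | u ∈ P ∧ ∀ x ∈ N, x * u ∈ N})
    (hFs : ∀ m : ℕ, Filt (m + 1) =
      {u : A | u ∈ P ∧ ∀ x ∈ N, ∃ y ∈ Filt m, ∃ z ∈ N, x * u = y + z})
    (NFilt : ℕ → Set A)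
    (hN0 : NFilt 0 = (N : Set A))
    (hNs : ∀ m : ℕ, NFilt (m + 1) = {u : A | u ∈ N ∧ ∀ y ∈ Filt m, B u y = 0}) :
    ∀ m n : ℕ, ∀ u ∈ NFilt m, ∀ v ∈ NFilt n, u * v ∈ NFilt (m + n + 1) := by
  have hNFilt : ∀ k, NFilt k = PolarizedAlgebra.negFilt B P N k
    | 0 => by simp [hN0, PolarizedAlgebra.negFilt, PolarizedAlgebra.posFilt]
    | k + 1 => by
      rw [hNs, PolarizedAlgebra.negFilt, ← PolarizedAlgebra.eq_posFilt_succ hF0 hFs]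
  intro m n u hu v hv
  rw [hNFilt] at hu hv ⊢
  exact PolarizedAlgebra.mul_mem_negFilt hsymm hassoc hnd hNmul hPiso hNiso hcompl.codisjoint
    hu hv

/-- `A⁽⁻ᵐ⁻¹⁾ · A⁽⁻ⁿ⁻¹⁾ ⊆ A⁽⁻ᵐ⁻ⁿ⁻²⁾`.  Here `NFilt k` stands for
`A⁽⁻ᵏ⁻¹⁾`, so `NFilt 0 = A⁽⁻¹⁾ = A⁻` and `NFilt (m+1) = A⁽⁻²⁻ᵐ⁾`, and the claim
reads `NFilt m · NFilt n ⊆ NFilt (m + n + 1)`. -/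
theorem polarized_neg_filt_mul
    {F : Type*} [Field F] {A : Type*} [Ring A] [Algebra F A]
    (B : LinearMap.BilinForm F A)
    (hsymm : ∀ u v : A, B u v = B v u)
    (hassoc : ∀ u v w : A, B (u * v) w = B u (v * w))
    (hnd : ∀ u : A, (∀ v : A, B u v = 0) → u = 0)
    (P N : Submodule F A)
    (hPmul : ∀ a ∈ P, ∀ b ∈ P, a * b ∈ P)
    (hNmul : ∀ a ∈ N, ∀ b ∈ N, a * b ∈ N)
    (hPiso : ∀ a ∈ P, ∀ b ∈ P, B a b = 0)
    (hNiso : ∀ a ∈ N, ∀ b ∈ N, B a b = 0)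
    (hcompl : IsCompl P N)
    (Filt : ℕ → Set A)
    (hF0 : Filt 0 = {u : A | u ∈ P ∧ ∀ x ∈ N, x * u ∈ N})
    (hFs : ∀ m : ℕ, Filt (m + 1) =
      {u : A | u ∈ P ∧ ∀ x ∈ N, ∃ y ∈ Filt m, ∃ z ∈ N, x * u = y + z})
    (NFilt : ℕ → Set A)
    (hN0 : NFilt 0 = (N : Set A))
    (hNs : ∀ m : ℕ, NFilt (m + 1) = {u : A | u ∈ N ∧ ∀ y ∈ Filt m, B u y = 0}) :
    ∀ m n : ℕ, ∀ u ∈ NFilt m, ∀ v ∈ NFilt n, u * v ∈ NFilt (m + n + 1) :=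
  polarized_neg_filt_mul_general B hsymm hassoc hnd P N hNmul hPiso hNiso hcompl Filt hF0 hFs NFilt
    hN0 hNs
end

section
/- Let A = A⁺ ⊕ A⁻ be a polarized associative algebra with filtration A⁽ᵐ⁾ (m ∈ ℤ) defined by A⁽⁰⁾ = {u ∈ A⁺ | A⁻u ⊆ A⁻}, A⁽ᵐ⁺¹⁾ = {u ∈ A⁺ | A⁻u ⊆ A⁽ᵐ⁾ + A⁻}, A⁽⁻¹⁾ = A⁻, and A⁽⁻²⁻ᵐ⁾ = {u ∈ A⁻ | ⟨u, A⁽ᵐ⁾⟩ = 0}. Then for all m, n ∈ ℕ: A⁽ᵐ⁾ · A⁽⁻ᵐ⁻ⁿ⁻²⁾ ⊆ A⁽⁻ⁿ⁻²⁾. -/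
/-!
Write `A⁽ᵐ⁾` for the positive filtration. Two facts drive the proof. First, the filtration is
multiplicative, `A⁽ᵐ⁾ · A⁽ⁿ⁾ ⊆ A⁽ᵐ⁺ⁿ⁾`, so for `u ∈ A⁽ᵐ⁾`, `v ⊥ A⁽ᵐ⁺ⁿ⁾` and `y ∈ A⁽ⁿ⁾`
associativity of the form gives `⟨uv, y⟩ = ⟨v, yu⟩ = 0`. Second, `uv ∈ A⁻`: since `A⁻` is a
maximal isotropic complement of the isotropic `A⁺`, it suffices that `uv ⊥ A⁻`, and for `x ∈ A⁻`
we have `⟨uv, x⟩ = ⟨xu, v⟩` with `xu ∈ A⁽ᵐ⁻¹⁾ + A⁻`, both summands being orthogonal to `v`.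
-/

namespace Submodule

section Filtration

variable {R A : Type*} [Semiring R] [Semiring A] [Module R A] (P N : Submodule R A)

/-- The positive filtration `A⁽ᵐ⁾` of the polarization `A = P ⊕ N`. -/
def polarizedFiltration : ℕ → Set A
  | 0 => {u | u ∈ P ∧ ∀ x ∈ N, x * u ∈ N}
  | m + 1 => {u | u ∈ P ∧ ∀ x ∈ N, ∃ y ∈ polarizedFiltration m, ∃ z ∈ N, x * u = y + z}

variable {P N}

theorem polarizedFiltration_subset : ∀ m, polarizedFiltration P N m ⊆ P
  | 0, _, hu => hu.1
  | _ + 1, _, hu => hu.1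

theorem eq_polarizedFiltration {Filt : ℕ → Set A}
    (h0 : Filt 0 = {u : A | u ∈ P ∧ ∀ x ∈ N, x * u ∈ N})
    (hsucc : ∀ m : ℕ, Filt (m + 1) =
      {u : A | u ∈ P ∧ ∀ x ∈ N, ∃ y ∈ Filt m, ∃ z ∈ N, x * u = y + z}) :
    Filt = polarizedFiltration P N := by
  funext m
  induction m with
  | zero => exact h0
  | succ m ih => rw [hsucc, ih]; rfl

theorem add_mem_polarizedFiltration {m : ℕ} {u w : A} (hu : u ∈ polarizedFiltration P N m)
    (hw : w ∈ polarizedFiltration P N m) : u + w ∈ polarizedFiltration P N m := by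
  induction m generalizing u w with
  | zero =>
    exact ⟨P.add_mem hu.1 hw.1, fun x hx => mul_add x u w ▸ N.add_mem (hu.2 x hx) (hw.2 x hx)⟩
  | succ m ih =>
    refine ⟨P.add_mem hu.1 hw.1, fun x hx => ?_⟩
    obtain ⟨y, hy, z, hz, hxu⟩ := hu.2 x hx
    obtain ⟨y', hy', z', hz', hxw⟩ := hw.2 x hx
    exact ⟨y + y', ih hy hy', z + z', N.add_mem hz hz', by rw [mul_add, hxu, hxw]; abel⟩

theorem polarizedFiltration_subset_succ (m : ℕ) :
    polarizedFiltration P N m ⊆ polarizedFiltration P N (m + 1) := by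
  induction m with
  | zero =>
    have zero_mem : (0 : A) ∈ polarizedFiltration P N 0 :=
      ⟨P.zero_mem, fun x _ => (mul_zero x).symm ▸ N.zero_mem⟩
    exact fun u hu => ⟨hu.1, fun x hx => ⟨0, zero_mem, x * u, hu.2 x hx, (zero_add _).symm⟩⟩
  | succ m ih =>
    intro u hu
    refine ⟨hu.1, fun x hx => ?_⟩
    obtain ⟨y, hy, z, hz, hxu⟩ := hu.2 x hx
    exact ⟨y, ih hy, z, hz, hxu⟩

theorem polarizedFiltration_mono : Monotone (polarizedFiltration P N) :=
  monotone_nat_of_le_succ polarizedFiltration_subset_succ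

theorem mul_mem_polarizedFiltration_of_mem_zero (hPmul : ∀ a ∈ P, ∀ b ∈ P, a * b ∈ P)
    {n : ℕ} {u w : A} (hu : u ∈ polarizedFiltration P N 0) (hw : w ∈ polarizedFiltration P N n) :
    u * w ∈ polarizedFiltration P N n := by
  have huw : u * w ∈ P := hPmul u hu.1 w (polarizedFiltration_subset n hw)
  cases n <;> exact ⟨huw, fun x hx => mul_assoc x u w ▸ hw.2 _ (hu.2 x hx)⟩

theorem mul_mem_polarizedFiltration (hPmul : ∀ a ∈ P, ∀ b ∈ P, a * b ∈ P) {m n : ℕ} {u w : A}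
    (hu : u ∈ polarizedFiltration P N m) (hw : w ∈ polarizedFiltration P N n) :
    u * w ∈ polarizedFiltration P N (m + n) := by
  induction m generalizing u with
  | zero => simpa using mul_mem_polarizedFiltration_of_mem_zero hPmul hu hw
  | succ m ih =>
    rw [Nat.succ_add]
    refine ⟨hPmul u hu.1 w (polarizedFiltration_subset n hw), fun x hx => ?_⟩
    obtain ⟨y, hy, z, hz, hxu⟩ := hu.2 x hx
    have hxuw : x * (u * w) = y * w + z * w := by rw [← mul_assoc, hxu, add_mul]
    cases n with
    | zero => exact ⟨y * w, ih hy, z * w, hw.2 z hz, hxuw⟩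
    | succ n =>
      obtain ⟨y', hy', z', hz', hzw⟩ := hw.2 z hz
      have hy'' : y' ∈ polarizedFiltration P N (m + (n + 1)) :=
        polarizedFiltration_mono (by omega) hy'
      exact ⟨y * w + y', add_mem_polarizedFiltration (ih hy) hy'', z', hz',
        by rw [hxuw, hzw]; abel⟩

end Filtration

theorem mem_of_isCompl_of_isotropic {R M : Type*} [CommSemiring R] [AddCommMonoid M]
    [Module R M] {B : LinearMap.BilinForm R M} (hB : B.SeparatingLeft) {P N : Submodule R M}
    (hPiso : ∀ a ∈ P, ∀ b ∈ P, B a b = 0) (hNiso : ∀ a ∈ N, ∀ b ∈ N, B a b = 0)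
    (hcompl : IsCompl P N) {w : M} (hw : ∀ x ∈ N, B w x = 0) : w ∈ N := by
  have decompose (a : M) : ∃ p ∈ P, ∃ q ∈ N, p + q = a :=
    mem_sup.mp (hcompl.sup_eq_top ▸ mem_top)
  obtain ⟨p, hp, q, hq, rfl⟩ := decompose w
  have hp_ortho_N (x : M) (hx : x ∈ N) : B p x = 0 := by
    simpa [hNiso q hq x hx] using hw x hx
  suffices p = 0 by simpa [this] using hq
  refine hB p fun a => ?_
  obtain ⟨a₁, ha₁, a₂, ha₂, rfl⟩ := decompose a
  simp [hPiso p hp a₁ ha₁, hp_ortho_N a₂ ha₂]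

section Polarized

variable {R A : Type*} [CommSemiring R] [Semiring A] [Module R A] {B : LinearMap.BilinForm R A}
  {P N : Submodule R A}

theorem apply_mul_eq_zero_of_orthogonal (hsymm : ∀ u v : A, B u v = B v u)
    (hassoc : ∀ u v w : A, B (u * v) w = B u (v * w)) (hPmul : ∀ a ∈ P, ∀ b ∈ P, a * b ∈ P)
    {m n : ℕ} {u v y : A} (hu : u ∈ polarizedFiltration P N m)
    (hv : ∀ y ∈ polarizedFiltration P N (m + n), B v y = 0) (hy : y ∈ polarizedFiltration P N n) :
    B (u * v) y = 0 := by
  rw [hsymm, ← hassoc, hsymm]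
  exact hv _ (add_comm n m ▸ mul_mem_polarizedFiltration hPmul hy hu)

theorem apply_mul_eq_zero_of_mem_of_orthogonal (hsymm : ∀ u v : A, B u v = B v u)
    (hassoc : ∀ u v w : A, B (u * v) w = B u (v * w)) (hNiso : ∀ a ∈ N, ∀ b ∈ N, B a b = 0)
    {m n : ℕ} {u v x : A} (hu : u ∈ polarizedFiltration P N m) (hvN : v ∈ N)
    (hv : ∀ y ∈ polarizedFiltration P N (m + n), B v y = 0) (hx : x ∈ N) :
    B (u * v) x = 0 := by
  rw [hsymm, ← hassoc]
  cases m with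
  | zero => exact hNiso _ (hu.2 x hx) v hvN
  | succ m =>
    obtain ⟨y, hy, z, hz, hxu⟩ := hu.2 x hx
    have hyv : B y v = 0 := by
      rw [hsymm]
      exact hv y (polarizedFiltration_mono (by omega) hy)
    simp [hxu, hyv, hNiso z hz v hvN]

end Polarized

end Submodule

open Submodule in
theorem polarized_pos_mul_neg_filt_general
    {F : Type*} [Field F] {A : Type*} [Ring A] [Algebra F A]
    (B : LinearMap.BilinForm F A)
    (hsymm : ∀ u v : A, B u v = B v u)
    (hassoc : ∀ u v w : A, B (u * v) w = B u (v * w))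
    (hnd : ∀ u : A, (∀ v : A, B u v = 0) → u = 0)
    (P N : Submodule F A)
    (hPmul : ∀ a ∈ P, ∀ b ∈ P, a * b ∈ P)
    (hPiso : ∀ a ∈ P, ∀ b ∈ P, B a b = 0)
    (hNiso : ∀ a ∈ N, ∀ b ∈ N, B a b = 0)
    (hcompl : IsCompl P N)
    (Filt : ℕ → Set A)
    (hF0 : Filt 0 = {u : A | u ∈ P ∧ ∀ x ∈ N, x * u ∈ N})
    (hFs : ∀ m : ℕ, Filt (m + 1) =
      {u : A | u ∈ P ∧ ∀ x ∈ N, ∃ y ∈ Filt m, ∃ z ∈ N, x * u = y + z})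
    (NFilt : ℕ → Set A)
    (hNs : ∀ m : ℕ, NFilt (m + 1) = {u : A | u ∈ N ∧ ∀ y ∈ Filt m, B u y = 0}) :
    ∀ m n : ℕ, ∀ u ∈ Filt m, ∀ v ∈ NFilt (m + n + 1), u * v ∈ NFilt (n + 1) := by
  obtain rfl := eq_polarizedFiltration hF0 hFs
  intro m n u hu v hv
  rw [hNs] at hv ⊢
  exact ⟨mem_of_isCompl_of_isotropic hnd hPiso hNiso hcompl fun x hx =>
      apply_mul_eq_zero_of_mem_of_orthogonal hsymm hassoc hNiso hu hv.1 hv.2 hx,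
    fun y hy => apply_mul_eq_zero_of_orthogonal hsymm hassoc hPmul hu hv.2 hy⟩

/-- `A⁽ᵐ⁾ · A⁽⁻ᵐ⁻ⁿ⁻²⁾ ⊆ A⁽⁻ⁿ⁻²⁾`.  With `NFilt k = A⁽⁻ᵏ⁻¹⁾` this
reads `Filt m · NFilt (m + n + 1) ⊆ NFilt (n + 1)`. -/
theorem polarized_pos_mul_neg_filt
    {F : Type*} [Field F] {A : Type*} [Ring A] [Algebra F A]
    (B : LinearMap.BilinForm F A)
    (hsymm : ∀ u v : A, B u v = B v u)
    (hassoc : ∀ u v w : A, B (u * v) w = B u (v * w))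
    (hnd : ∀ u : A, (∀ v : A, B u v = 0) → u = 0)
    (P N : Submodule F A)
    (hPmul : ∀ a ∈ P, ∀ b ∈ P, a * b ∈ P)
    (hNmul : ∀ a ∈ N, ∀ b ∈ N, a * b ∈ N)
    (hPiso : ∀ a ∈ P, ∀ b ∈ P, B a b = 0)
    (hNiso : ∀ a ∈ N, ∀ b ∈ N, B a b = 0)
    (hcompl : IsCompl P N)
    (Filt : ℕ → Set A)
    (hF0 : Filt 0 = {u : A | u ∈ P ∧ ∀ x ∈ N, x * u ∈ N})
    (hFs : ∀ m : ℕ, Filt (m + 1) =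
      {u : A | u ∈ P ∧ ∀ x ∈ N, ∃ y ∈ Filt m, ∃ z ∈ N, x * u = y + z})
    (NFilt : ℕ → Set A)
    (hN0 : NFilt 0 = (N : Set A))
    (hNs : ∀ m : ℕ, NFilt (m + 1) = {u : A | u ∈ N ∧ ∀ y ∈ Filt m, B u y = 0}) :
    ∀ m n : ℕ, ∀ u ∈ Filt m, ∀ v ∈ NFilt (m + n + 1), u * v ∈ NFilt (n + 1) :=
  polarized_pos_mul_neg_filt_general B hsymm hassoc hnd P N hPmul hPiso hNiso hcompl Filt hF0 hFs
    NFilt hNs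
end

section
/- Let A = A⁺ ⊕ A⁻ be a polarized associative algebra over a field F, with A⁽⁰⁾ = {u ∈ A⁺ | A⁻u ⊆ A⁻}. Then A⁽⁰⁾ · A⁻ ⊆ A⁻, i.e., every element of A⁽⁰⁾ also maps A⁻ into A⁻ by right multiplication. -/
/-! A Lagrangian splitting `A = P ⊕ N` of a nondegenerate form forces `N` to be its own
orthogonal. For `u` with `N u ⊆ N` and `x, m ∈ N`, invariance and symmetry give
`⟨u x, m⟩ = ⟨m u, x⟩ = 0`, so `u x ∈ N`. -/

namespace LinearMap.BilinForm

theorem mem_of_forall_apply_eq_zero_of_isCompl_s7 {R M : Type*} [CommSemiring R]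
    [AddCommMonoid M] [Module R M] {B : LinearMap.BilinForm R M} (hB : B.SeparatingLeft)
    {P N : Submodule R M} (hP : ∀ a ∈ P, ∀ b ∈ P, B a b = 0)
    (hN : ∀ a ∈ N, ∀ b ∈ N, B a b = 0) (hPN : IsCompl P N) {y : M}
    (hy : ∀ m ∈ N, B y m = 0) : y ∈ N := by
  obtain ⟨p, n, hp, hn, rfl⟩ := Submodule.codisjoint_iff_exists_add_eq.mp hPN.codisjoint y
  have hp0 : p = 0 := hB p fun v => by
    obtain ⟨q, m, hq, hm, rfl⟩ := Submodule.codisjoint_iff_exists_add_eq.mp hPN.codisjoint v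
    have hpm : B p m = 0 := by simpa [hN n hn m hm] using hy m hm
    simp [hP p hp q hq, hpm]
  simpa [hp0] using hn

end LinearMap.BilinForm

theorem polarized_filt_zero_right_stable_general
    {F : Type*} [Field F] {A : Type*} [Ring A] [Algebra F A]
    (B : LinearMap.BilinForm F A)
    (hsymm : ∀ u v : A, B u v = B v u)
    (hassoc : ∀ u v w : A, B (u * v) w = B u (v * w))
    (hnd : ∀ u : A, (∀ v : A, B u v = 0) → u = 0)
    (P N : Submodule F A)
    (hPiso : ∀ a ∈ P, ∀ b ∈ P, B a b = 0)
    (hNiso : ∀ a ∈ N, ∀ b ∈ N, B a b = 0)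
    (hcompl : IsCompl P N) :
    ∀ u ∈ {u : A | u ∈ P ∧ ∀ x ∈ N, x * u ∈ N}, ∀ x ∈ N, u * x ∈ N := by
  rintro u ⟨-, huN⟩ x hx
  refine LinearMap.BilinForm.mem_of_forall_apply_eq_zero_of_isCompl_s7 hnd hPiso hNiso hcompl
    fun m hm => ?_
  rw [hsymm, ← hassoc]
  exact hNiso _ (huN m hm) x hx

/-- `A⁽⁰⁾ · A⁻ ⊆ A⁻`: elements of `A⁽⁰⁾` also stabilize `A⁻`
under right multiplication. -/
theorem polarized_filt_zero_right_stable
    {F : Type*} [Field F] {A : Type*} [Ring A] [Algebra F A]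
    (B : LinearMap.BilinForm F A)
    (hsymm : ∀ u v : A, B u v = B v u)
    (hassoc : ∀ u v w : A, B (u * v) w = B u (v * w))
    (hnd : ∀ u : A, (∀ v : A, B u v = 0) → u = 0)
    (P N : Submodule F A)
    (hPmul : ∀ a ∈ P, ∀ b ∈ P, a * b ∈ P)
    (hNmul : ∀ a ∈ N, ∀ b ∈ N, a * b ∈ N)
    (hPiso : ∀ a ∈ P, ∀ b ∈ P, B a b = 0)
    (hNiso : ∀ a ∈ N, ∀ b ∈ N, B a b = 0)
    (hcompl : IsCompl P N) :
    ∀ u ∈ {u : A | u ∈ P ∧ ∀ x ∈ N, x * u ∈ N}, ∀ x ∈ N, u * x ∈ N :=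
  polarized_filt_zero_right_stable_general B hsymm hassoc hnd P N hPiso hNiso hcompl
end

section
/- Let A be an associative algebra with a nondegenerate symmetric associative bilinear form ⟨·,·⟩ and a direct sum decomposition A = A⁺ ⊕ A⁻ into isotropic subalgebras. For v ∈ A write v = v₊ + v₋ with v₊ ∈ A⁺, v₋ ∈ A⁻. Then for all u, v, w ∈ A: ⟨u, vw⟩ = ⟨u, v₊w₋⟩ + ⟨v, w₊u₋⟩ + ⟨w, u₊v₋⟩. -/
/-!
Expand `⟨u, vw⟩` trilinearly along the splitting into eight terms `⟨u±, v±w±⟩`. The terms of type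
`(+,+,+)` and `(-,-,-)` vanish because `A⁺` and `A⁻` are isotropic subalgebras, and each of the
remaining six is brought by the cyclic invariance `⟨x, yz⟩ = ⟨y, zx⟩` (symmetry plus associativity)
into the form `⟨x, y₊z₋⟩`; these regroup into the three terms of the identity.
-/

namespace LinearMap.BilinForm

variable {R A : Type*} [CommRing R] [NonUnitalNonAssocRing A] [Module R A]

theorem apply_mul_cyclic {B : LinearMap.BilinForm R A} (hsymm : ∀ x y, B x y = B y x)
    (hassoc : ∀ x y z, B (x * y) z = B x (y * z)) (x y z : A) :
    B x (y * z) = B y (z * x) :=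
  (hsymm _ _).trans (hassoc _ _ _)

theorem apply_add_mul_add_of_cyclic {B : LinearMap.BilinForm R A}
    (hcyc : ∀ x y z, B x (y * z) = B y (z * x)) {uP uN vP vN wP wN : A}
    (hP : B uP (vP * wP) = 0) (hN : B uN (vN * wN) = 0) :
    B (uP + uN) ((vP + vN) * (wP + wN)) =
      B (uP + uN) (vP * wN) + B (vP + vN) (wP * uN) + B (wP + wN) (uP * vN) := by
  simp only [mul_add, add_mul, map_add, LinearMap.add_apply]
  linear_combination hP + hN + hcyc uN vP wP + hcyc uN vN wP - hcyc wP uP vN - hcyc wN uP vN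

end LinearMap.BilinForm

theorem polarized_triple_product_identity_general
    {F : Type*} [Field F] {A : Type*} [Ring A] [Algebra F A]
    (B : LinearMap.BilinForm F A)
    (hsymm : ∀ u v : A, B u v = B v u)
    (hassoc : ∀ u v w : A, B (u * v) w = B u (v * w))
    (P N : Submodule F A)
    (hPmul : ∀ a ∈ P, ∀ b ∈ P, a * b ∈ P)
    (hNmul : ∀ a ∈ N, ∀ b ∈ N, a * b ∈ N)
    (hPiso : ∀ a ∈ P, ∀ b ∈ P, B a b = 0)
    (hNiso : ∀ a ∈ N, ∀ b ∈ N, B a b = 0)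
    (pp pm : A → A)
    (hpp : ∀ v : A, pp v ∈ P) (hpm : ∀ v : A, pm v ∈ N)
    (hdecomp : ∀ v : A, pp v + pm v = v) :
    ∀ u v w : A,
      B u (v * w) = B u (pp v * pm w) + B v (pp w * pm u) + B w (pp u * pm v) := by
  intro u v w
  have key := LinearMap.BilinForm.apply_add_mul_add_of_cyclic
    (LinearMap.BilinForm.apply_mul_cyclic hsymm hassoc)
    (hPiso _ (hpp u) _ (hPmul _ (hpp v) _ (hpp w)))
    (hNiso _ (hpm u) _ (hNmul _ (hpm v) _ (hpm w)))
  rwa [hdecomp u, hdecomp v, hdecomp w] at key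

/-- Lemma 4.2, first identity:
`⟨u, vw⟩ = ⟨u, v₊w₋⟩ + ⟨v, w₊u₋⟩ + ⟨w, u₊v₋⟩`. -/
theorem polarized_triple_product_identity
    {F : Type*} [Field F] {A : Type*} [Ring A] [Algebra F A]
    (B : LinearMap.BilinForm F A)
    (hsymm : ∀ u v : A, B u v = B v u)
    (hassoc : ∀ u v w : A, B (u * v) w = B u (v * w))
    (hnd : ∀ u : A, (∀ v : A, B u v = 0) → u = 0)
    (P N : Submodule F A)
    (hPmul : ∀ a ∈ P, ∀ b ∈ P, a * b ∈ P)
    (hNmul : ∀ a ∈ N, ∀ b ∈ N, a * b ∈ N)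
    (hPiso : ∀ a ∈ P, ∀ b ∈ P, B a b = 0)
    (hNiso : ∀ a ∈ N, ∀ b ∈ N, B a b = 0)
    (hcompl : IsCompl P N)
    (pp pm : A → A)
    (hpp : ∀ v : A, pp v ∈ P) (hpm : ∀ v : A, pm v ∈ N)
    (hdecomp : ∀ v : A, pp v + pm v = v) :
    ∀ u v w : A,
      B u (v * w) = B u (pp v * pm w) + B v (pp w * pm u) + B w (pp u * pm v) :=
  polarized_triple_product_identity_general B hsymm hassoc P N hPmul hNmul hPiso hNiso pp pm hpp hpm
    hdecomp
end

section
/- Let A be an associative algebra with a symmetric associative bilinear form ⟨·,·⟩ and decomposition A = A⁺ ⊕ A⁻ into isotropic subalgebras, with projections v ↦ v₊, v ↦ v₋. Fix L ∈ A and define H : A → A by H(u) = (Lu)₋L − L(uL)₋. Then ⟨H(v), u⟩ = −⟨H(u), v⟩ for all u, v ∈ A. -/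
/-!
Associativity and symmetry move the outer factor `L` of each term of `⟨H(v), u⟩` across the
form, giving `⟨(Lv)₋, Lu⟩ - ⟨(vL)₋, uL⟩`. Since `A⁺` and `A⁻` are isotropic,
`⟨x₋, y⟩ + ⟨y₋, x⟩ = ⟨x, y⟩`, so `⟨H(v), u⟩ + ⟨H(u), v⟩ = ⟨Lv, Lu⟩ - ⟨vL, uL⟩`, which vanishes
because both terms equal `⟨L, vLuL⟩` up to symmetry.
-/

namespace LinearMap.BilinForm

section IsotropicDecomposition

variable {R M : Type*} [CommSemiring R] [AddCommMonoid M] [Module R M]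
  (B : LinearMap.BilinForm R M) {P N : Set M}

theorem apply_add_apply_of_isotropic (hPiso : ∀ a ∈ P, ∀ b ∈ P, B a b = 0)
    (hNiso : ∀ a ∈ N, ∀ b ∈ N, B a b = 0) {p p' n n' : M} (hp : p ∈ P) (hp' : p' ∈ P)
    (hn : n ∈ N) (hn' : n' ∈ N) :
    B n (p' + n') + B (p + n) n' = B (p + n) (p' + n') := by
  simp only [map_add, LinearMap.add_apply, hPiso p hp p' hp', hNiso n hn n' hn']
  ring

theorem apply_proj_add_apply_proj (hPiso : ∀ a ∈ P, ∀ b ∈ P, B a b = 0)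
    (hNiso : ∀ a ∈ N, ∀ b ∈ N, B a b = 0) {pp pm : M → M} (hpp : ∀ v, pp v ∈ P)
    (hpm : ∀ v, pm v ∈ N) (hdecomp : ∀ v, pp v + pm v = v) (x y : M) :
    B (pm x) y + B x (pm y) = B x y := by
  simpa only [hdecomp] using
    B.apply_add_apply_of_isotropic hPiso hNiso (hpp x) (hpp y) (hpm x) (hpm y)

end IsotropicDecomposition

section Associative

variable {R A : Type*} [CommSemiring R] [Semiring A] [Module R A] (B : LinearMap.BilinForm R A)

theorem apply_mul_left_eq_apply_mul_right (hsymm : ∀ u v, B u v = B v u)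
    (hassoc : ∀ u v w, B (u * v) w = B u (v * w)) (L w u : A) : B (L * w) u = B w (u * L) := by
  rw [hsymm, ← hassoc, hsymm]

theorem apply_mul_left_mul_left_eq (hsymm : ∀ u v, B u v = B v u)
    (hassoc : ∀ u v w, B (u * v) w = B u (v * w)) (L v u : A) :
    B (L * v) (L * u) = B (v * L) (u * L) := by
  rw [← hassoc, mul_assoc, hassoc, hsymm, hassoc]

end Associative

end LinearMap.BilinForm

theorem adler_map_skew_general
    {F : Type*} [Field F] {A : Type*} [Ring A] [Algebra F A]
    (B : LinearMap.BilinForm F A)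
    (hsymm : ∀ u v : A, B u v = B v u)
    (hassoc : ∀ u v w : A, B (u * v) w = B u (v * w))
    (P N : Submodule F A)
    (hPiso : ∀ a ∈ P, ∀ b ∈ P, B a b = 0)
    (hNiso : ∀ a ∈ N, ∀ b ∈ N, B a b = 0)
    (pp pm : A → A)
    (hpp : ∀ v : A, pp v ∈ P) (hpm : ∀ v : A, pm v ∈ N)
    (hdecomp : ∀ v : A, pp v + pm v = v)
    (L : A) :
    ∀ u v : A,
      B (pm (L * v) * L - L * pm (v * L)) u
        = - B (pm (L * u) * L - L * pm (u * L)) v := by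
  intro u v
  have hproj (x y : A) : B (pm x) y + B (pm y) x = B x y := by
    rw [hsymm (pm y)]
    exact B.apply_proj_add_apply_proj hPiso hNiso hpp hpm hdecomp x y
  simp only [map_sub, LinearMap.sub_apply, hassoc (pm _),
    B.apply_mul_left_eq_apply_mul_right hsymm hassoc L (pm _)]
  linear_combination hproj (L * v) (L * u) - hproj (v * L) (u * L) +
    B.apply_mul_left_mul_left_eq hsymm hassoc L v u

/-- the Adler mapping `H(u) = (Lu)₋L − L(uL)₋` is skew-symmetric
with respect to the form: `⟨H(v), u⟩ = −⟨H(u), v⟩`. -/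
theorem adler_map_skew
    {F : Type*} [Field F] {A : Type*} [Ring A] [Algebra F A]
    (B : LinearMap.BilinForm F A)
    (hsymm : ∀ u v : A, B u v = B v u)
    (hassoc : ∀ u v w : A, B (u * v) w = B u (v * w))
    (P N : Submodule F A)
    (hPmul : ∀ a ∈ P, ∀ b ∈ P, a * b ∈ P)
    (hNmul : ∀ a ∈ N, ∀ b ∈ N, a * b ∈ N)
    (hPiso : ∀ a ∈ P, ∀ b ∈ P, B a b = 0)
    (hNiso : ∀ a ∈ N, ∀ b ∈ N, B a b = 0)
    (hcompl : IsCompl P N)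
    (pp pm : A → A)
    (hpp : ∀ v : A, pp v ∈ P) (hpm : ∀ v : A, pm v ∈ N)
    (hdecomp : ∀ v : A, pp v + pm v = v)
    (L : A) :
    ∀ u v : A,
      B (pm (L * v) * L - L * pm (v * L)) u
        = - B (pm (L * u) * L - L * pm (u * L)) v :=
  adler_map_skew_general B hsymm hassoc P N hPiso hNiso pp pm hpp hpm hdecomp L
end

section
/- Let A be an associative algebra with a symmetric associative bilinear form ⟨·,·⟩ and decomposition A = A⁺ ⊕ A⁻ into isotropic subalgebras. Fix L ∈ A and let H(u) = (Lu)₋L − L(uL)₋. Then for all u, v, w ∈ A: ⟨L(uL)₋v, (Lw)₊⟩ + ⟨(Lu)₋L(vL)₋, w⟩ − ⟨(uL)₋(vL)₋, wL⟩, summed cyclically over (u,v,w), equals ⟨uLvL, wL⟩. -/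
/-!
Write `a = uL`, `b = vL`, `c = wL` and `τ(x, y, z) = ⟨xy, z⟩`, which is invariant under cyclic
permutations. Moving `L` around the form turns `⟨L(uL)₋v, Lw⟩` into `τ(a₋, b, c)`, and splitting
`(Lw)₊ = Lw − (Lw)₋` produces terms `⟨L(uL)₋v, (Lw)₋⟩` which cancel cyclically against the second
summands `⟨(Lu)₋L(vL)₋, w⟩`. Together with the third summands, what remains is the cyclic sum of
`τ(a₋, b₊, c)`. Expanding `τ(a, b, c)` into its eight `±`-components, the two pure ones vanish by
isotropy of the subalgebras `A⁺`, `A⁻`, and the remaining six are exactly that cyclic sum.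
-/

namespace LinearMap.BilinForm

section NonUnitalNonAssocSemiring

variable {R A : Type*} [CommSemiring R] [NonUnitalNonAssocSemiring A] [Module R A]
  {B : LinearMap.BilinForm R A}

theorem apply_mul_eq_apply_mul_rotate (hsymm : ∀ u v : A, B u v = B v u)
    (hassoc : ∀ u v w : A, B (u * v) w = B u (v * w)) (x y z : A) :
    B (x * y) z = B (y * z) x := by
  rw [hassoc, hsymm]

theorem apply_mul_eq_cyclic_sum_of_isotropic (hsymm : ∀ u v : A, B u v = B v u)
    (hassoc : ∀ u v w : A, B (u * v) w = B u (v * w))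
    (P N : Submodule R A)
    (hPmul : ∀ a ∈ P, ∀ b ∈ P, a * b ∈ P) (hNmul : ∀ a ∈ N, ∀ b ∈ N, a * b ∈ N)
    (hPiso : ∀ a ∈ P, ∀ b ∈ P, B a b = 0) (hNiso : ∀ a ∈ N, ∀ b ∈ N, B a b = 0)
    (pp pm : A → A) (hpp : ∀ v : A, pp v ∈ P) (hpm : ∀ v : A, pm v ∈ N)
    (hdecomp : ∀ v : A, pp v + pm v = v) (a b c : A) :
    B (a * b) c = B (pm a * pp b) c + B (pm b * pp c) a + B (pm c * pp a) b := by
  have rot := apply_mul_eq_apply_mul_rotate hsymm hassoc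
  have hPPP : B (pp a * pp b) (pp c) = 0 := hPiso _ (hPmul _ (hpp a) _ (hpp b)) _ (hpp c)
  have hNNN : B (pm a * pm b) (pm c) = 0 := hNiso _ (hNmul _ (hpm a) _ (hpm b)) _ (hpm c)
  calc B (a * b) c = B ((pp a + pm a) * (pp b + pm b)) (pp c + pm c) := by simp only [hdecomp]
    _ = B (pm a * pp b) (pp c + pm c) + B (pm b * pp c) (pp a + pm a)
          + B (pm c * pp a) (pp b + pm b) := by
      simp only [add_mul, mul_add, map_add, LinearMap.add_apply]
      rw [← rot (pp a) (pm b), ← rot (pm a) (pm b), rot (pm c) (pp a) (pp b),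
        rot (pm c) (pp a) (pm b), hPPP, hNNN]
      ring
    _ = B (pm a * pp b) c + B (pm b * pp c) a + B (pm c * pp a) b := by simp only [hdecomp]

end NonUnitalNonAssocSemiring

section NonUnitalSemiring

variable {R A : Type*} [CommSemiring R] [NonUnitalSemiring A] [Module R A]
  {B : LinearMap.BilinForm R A}

theorem apply_mul_mul_left_mul_eq_apply_mul_right (hsymm : ∀ u v : A, B u v = B v u)
    (hassoc : ∀ u v w : A, B (u * v) w = B u (v * w)) (L x y z : A) :
    B (L * x * y) (L * z) = B (x * (y * L)) (z * L) := by
  rw [hassoc, hassoc, hsymm, ← hassoc]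
  simp only [mul_assoc]

end NonUnitalSemiring

section Ring

variable {R A : Type*} [CommRing R] [NonUnitalRing A] [Module R A] {B : LinearMap.BilinForm R A}

theorem apply_left_mul_proj_eq (hsymm : ∀ u v : A, B u v = B v u)
    (hassoc : ∀ u v w : A, B (u * v) w = B u (v * w))
    (pp pm : A → A) (hdecomp : ∀ v : A, pp v + pm v = v) (L x y z : A) :
    B (L * pm (x * L) * y) (pp (L * z)) =
      B (pm (x * L) * pp (y * L)) (z * L) + B (pm (x * L) * pm (y * L)) (z * L)
        - B (L * pm (x * L) * y) (pm (L * z)) := by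
  rw [eq_sub_of_add_eq (hdecomp (L * z)), map_sub,
    apply_mul_mul_left_mul_eq_apply_mul_right hsymm hassoc, ← hdecomp (y * L), mul_add, map_add,
    LinearMap.add_apply]
  simp only [hdecomp]

end Ring

end LinearMap.BilinForm

theorem adler_cyclic_identity_general
    {F : Type*} [Field F] {A : Type*} [Ring A] [Algebra F A]
    (B : LinearMap.BilinForm F A)
    (hsymm : ∀ u v : A, B u v = B v u)
    (hassoc : ∀ u v w : A, B (u * v) w = B u (v * w))
    (P N : Submodule F A)
    (hPmul : ∀ a ∈ P, ∀ b ∈ P, a * b ∈ P)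
    (hNmul : ∀ a ∈ N, ∀ b ∈ N, a * b ∈ N)
    (hPiso : ∀ a ∈ P, ∀ b ∈ P, B a b = 0)
    (hNiso : ∀ a ∈ N, ∀ b ∈ N, B a b = 0)
    (pp pm : A → A)
    (hpp : ∀ v : A, pp v ∈ P) (hpm : ∀ v : A, pm v ∈ N)
    (hdecomp : ∀ v : A, pp v + pm v = v)
    (L : A) :
    ∀ u v w : A,
      (fun u v w =>
          B (L * pm (u * L) * v) (pp (L * w))
            + B (pm (L * u) * L * pm (v * L)) w
            - B (pm (u * L) * pm (v * L)) (w * L)) u v w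
        + (fun u v w =>
          B (L * pm (u * L) * v) (pp (L * w))
            + B (pm (L * u) * L * pm (v * L)) w
            - B (pm (u * L) * pm (v * L)) (w * L)) v w u
        + (fun u v w =>
          B (L * pm (u * L) * v) (pp (L * w))
            + B (pm (L * u) * L * pm (v * L)) w
            - B (pm (u * L) * pm (v * L)) (w * L)) w u v
        = B (u * L * v * L) (w * L) := by
  intro u v w
  beta_reduce
  have split_first := LinearMap.BilinForm.apply_left_mul_proj_eq hsymm hassoc pp pm hdecomp L
  have rotate_second (x y z : A) :
      B (pm (L * x) * L * pm (y * L)) z = B (L * pm (y * L) * z) (pm (L * x)) := by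
    rw [mul_assoc, LinearMap.BilinForm.apply_mul_eq_apply_mul_rotate hsymm hassoc]
  rw [split_first u, split_first v, split_first w, rotate_second u, rotate_second v,
    rotate_second w, mul_assoc (u * L) v L,
    LinearMap.BilinForm.apply_mul_eq_cyclic_sum_of_isotropic hsymm hassoc P N hPmul hNmul
      hPiso hNiso pp pm hpp hpm hdecomp (u * L) (v * L) (w * L)]
  ring

/-- identity (4.76): the cyclic sum over `(u,v,w)` of
`⟨L(uL)₋v, (Lw)₊⟩ + ⟨(Lu)₋L(vL)₋, w⟩ − ⟨(uL)₋(vL)₋, wL⟩` equals `⟨uLvL, wL⟩`. -/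
theorem adler_cyclic_identity
    {F : Type*} [Field F] {A : Type*} [Ring A] [Algebra F A]
    (B : LinearMap.BilinForm F A)
    (hsymm : ∀ u v : A, B u v = B v u)
    (hassoc : ∀ u v w : A, B (u * v) w = B u (v * w))
    (P N : Submodule F A)
    (hPmul : ∀ a ∈ P, ∀ b ∈ P, a * b ∈ P)
    (hNmul : ∀ a ∈ N, ∀ b ∈ N, a * b ∈ N)
    (hPiso : ∀ a ∈ P, ∀ b ∈ P, B a b = 0)
    (hNiso : ∀ a ∈ N, ∀ b ∈ N, B a b = 0)
    (hcompl : IsCompl P N)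
    (pp pm : A → A)
    (hpp : ∀ v : A, pp v ∈ P) (hpm : ∀ v : A, pm v ∈ N)
    (hdecomp : ∀ v : A, pp v + pm v = v)
    (L : A) :
    ∀ u v w : A,
      (fun u v w =>
          B (L * pm (u * L) * v) (pp (L * w))
            + B (pm (L * u) * L * pm (v * L)) w
            - B (pm (u * L) * pm (v * L)) (w * L)) u v w
        + (fun u v w =>
          B (L * pm (u * L) * v) (pp (L * w))
            + B (pm (L * u) * L * pm (v * L)) w
            - B (pm (u * L) * pm (v * L)) (w * L)) v w u
        + (fun u v w =>
          B (L * pm (u * L) * v) (pp (L * w))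
            + B (pm (L * u) * L * pm (v * L)) w
            - B (pm (u * L) * pm (v * L)) (w * L)) w u v
        = B (u * L * v * L) (w * L) :=
  adler_cyclic_identity_general B hsymm hassoc P N hPmul hNmul hPiso hNiso pp pm hpp hpm hdecomp L
end
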